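/- arXiv:1012.2049 — 6 statements merged into one kernel-verified Lean document; each statement's English description precedes it below -/
import Mathlib

section
/- Let G be a group, A a subset of G, and consider the set (1−A) = { 1 − a : a ∈ A } inside the integral group ring ℤ[G]. If g ∈ G is such that (1 − g) lies in the right ℤ[G]-submodule of ℤ[G] generated by (1−A), then g lies in the subgroup of G generated by A. -/
/-!
Let `H` be the subgroup generated by `A`. Sending `u ∈ G` to its right coset `Hu` extends to a
`ℤ`-linear map `ℤ[G] → ℤ[H\G]` that commutes with the right action of `G`, so its kernel is a
right ideal. Every `1 - a` with `a ∈ A` lies in that kernel, hence so does `1 - g`;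
but `1 - g` maps to `H - Hg`, which vanishes only when `g ∈ H`.
-/

namespace MonoidAlgebra

variable {k G : Type*} [CommRing k] [Group G] (H : Subgroup G)

/-- The linear map `k[G] → k[H\G]`, `u ↦ Hu`, with the right coset `Hu` encoded as the
left coset `u⁻¹H`. -/
noncomputable def rightCosetMap : k[G] →ₗ[k] (G ⧸ H →₀ k) :=
  Finsupp.lmapDomain k k (fun u : G => ((u⁻¹ : G) : G ⧸ H)) ∘ₗ (coeffLinearEquiv k).toLinearMap

theorem rightCosetMap_single (u : G) (r : k) :
    rightCosetMap H (single u r) = Finsupp.single ((u⁻¹ : G) : G ⧸ H) r :=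
  Finsupp.mapDomain_single

theorem rightCosetMap_mul_of (x : k[G]) (t : G) :
    rightCosetMap H (x * of k G t) = (rightCosetMap H x).mapDomain (t⁻¹ • ·) := by
  induction x using MonoidAlgebra.induction_on with
  | of u =>
    rw [← map_mul, of_apply, of_apply, rightCosetMap_single, rightCosetMap_single,
      Finsupp.mapDomain_single, mul_inv_rev, ← smul_eq_mul, MulAction.Quotient.smul_mk]
  | add x y hx hy => rw [add_mul, map_add, hx, hy, map_add, Finsupp.mapDomain_add]
  | smul r x hx => rw [smul_mul_assoc, map_smul, hx, map_smul, Finsupp.mapDomain_smul]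

theorem rightCosetMap_mul_eq_zero {x : k[G]} (hx : rightCosetMap H x = 0) (y : k[G]) :
    rightCosetMap H (x * y) = 0 := by
  induction y using MonoidAlgebra.induction_on with
  | of t => rw [rightCosetMap_mul_of, hx, Finsupp.mapDomain_zero]
  | add y z hy hz => rw [mul_add, map_add, hy, hz, add_zero]
  | smul r y hy => rw [mul_smul_comm, map_smul, hy, smul_zero]

noncomputable def rightCosetKer : Submodule k[G]ᵐᵒᵖ k[G] where
  carrier := {x | rightCosetMap H x = 0}
  zero_mem' := map_zero _
  add_mem' {x y} (hx : rightCosetMap H x = 0) (hy : rightCosetMap H y = 0) := by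
    show rightCosetMap H (x + y) = 0
    rw [map_add, hx, hy, add_zero]
  smul_mem' y _ hx := rightCosetMap_mul_eq_zero H hx y.unop

theorem one_sub_of_mem_rightCosetKer_iff [Nontrivial k] (u : G) :
    1 - of k G u ∈ rightCosetKer H ↔ u ∈ H := by
  change rightCosetMap H (1 - of k G u) = 0 ↔ u ∈ H
  rw [map_sub, one_def, of_apply, rightCosetMap_single, rightCosetMap_single, sub_eq_zero,
    (Finsupp.single_left_injective one_ne_zero).eq_iff, eq_comm, QuotientGroup.eq]
  simp

theorem mem_of_one_sub_of_mem_span [Nontrivial k] {A : Set G} (hA : A ⊆ H) {g : G}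
    (hg : 1 - of k G g ∈ Submodule.span k[G]ᵐᵒᵖ ((fun a => 1 - of k G a) '' A)) : g ∈ H := by
  have hspan : Submodule.span k[G]ᵐᵒᵖ ((fun a => 1 - of k G a) '' A) ≤ rightCosetKer H :=
    Submodule.span_le.2 <| Set.image_subset_iff.2 fun a ha =>
      (one_sub_of_mem_rightCosetKer_iff H a).2 (hA ha)
  exact (one_sub_of_mem_rightCosetKer_iff H g).1 (hspan hg)

end MonoidAlgebra

/-- If `1 - g` lies in the right `ℤ[G]`-submodule of `ℤ[G]`
generated by `{1 - a : a ∈ A}`, then `g` lies in the subgroup generated by `A`. -/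
theorem stmt_0 {G : Type*} [Group G] (A : Set G) (g : G)
    (h : (1 - MonoidAlgebra.of ℤ G g) ∈
      Submodule.span (MonoidAlgebra ℤ G)ᵐᵒᵖ
        ((fun a => (1 : MonoidAlgebra ℤ G) - MonoidAlgebra.of ℤ G a) '' A)) :
    g ∈ Subgroup.closure A :=
  MonoidAlgebra.mem_of_one_sub_of_mem_span _ Subgroup.subset_closure h
end

section
/- Let G be a group and A a subset of G. If the right ℤ[G]-submodule of ℤ[G] generated by { 1 − a : a ∈ A } is finitely generated as a right ℤ[G]-module, then the subgroup of G generated by A is finitely generated. -/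
/-!
For a subgroup `H` of `G`, the additive functional "sum of the coefficients on `H`" on `R[G]` is
invariant under left multiplication by elements of `H`, so it vanishes on the right ideal generated
by the `1 - h`, `h ∈ H`. Since it takes the value `1 - 1_H(a)` at `1 - a`, membership of `1 - a` in
the right ideal generated by the `1 - b`, `b ∈ B`, forces `a ∈ ⟨B⟩`. A finitely generated right ideal
spanned by `{1 - a : a ∈ A}` is spanned by finitely many of these, coming from a finite `A₀ ⊆ A`,
and then every `a ∈ A` lies in `⟨A₀⟩`.
-/

namespace MonoidAlgebra

variable {R G : Type*} [Ring R] [Group G]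

noncomputable def coeffSumOn (H : Subgroup G) : R[G] →+ R :=
  (Finsupp.linearCombination R (Set.indicator (H : Set G) 1)).toAddMonoidHom.comp
    (coeffAddEquiv : R[G] ≃+ (G →₀ R)).toAddMonoidHom

lemma coeffSumOn_single (H : Subgroup G) (g : G) (r : R) :
    coeffSumOn H (single g r) = r * (H : Set G).indicator 1 g := by
  simp [coeffSumOn, coeffAddEquiv]

lemma coeffSumOn_of_mul {H : Subgroup G} {b : G} (hb : b ∈ H) (y : R[G]) :
    coeffSumOn H (of R G b * y) = coeffSumOn H y := by
  induction y using induction_linear with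
  | zero => simp
  | add x y hx hy => rw [mul_add, map_add, map_add, hx, hy]
  | single g r =>
    rw [of_apply, single_mul_single, one_mul, coeffSumOn_single, coeffSumOn_single]
    classical
    simp only [Set.indicator_apply, SetLike.mem_coe, H.mul_mem_cancel_left hb, Pi.one_apply]

lemma coeffSumOn_mul_eq_zero_of_mem_span {H : Subgroup G} {x : R[G]}
    (hx : x ∈ Submodule.span R[G]ᵐᵒᵖ ((fun b => 1 - of R G b) '' (H : Set G))) (y : R[G]) :
    coeffSumOn H (x * y) = 0 := by
  induction hx using Submodule.span_induction generalizing y with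
  | mem x hx =>
    obtain ⟨b, hb, rfl⟩ := hx
    rw [sub_mul, one_mul, map_sub, coeffSumOn_of_mul hb, sub_self]
  | zero => simp
  | add x x' _ _ hx hx' => rw [add_mul, map_add, hx, hx', add_zero]
  | smul r x _ hx => rw [MulOpposite.smul_eq_mul_unop, mul_assoc, hx]

lemma mem_closure_of_one_sub_of_mem_span [Nontrivial R] {B : Set G} {a : G}
    (ha : 1 - of R G a ∈ Submodule.span R[G]ᵐᵒᵖ ((fun b => 1 - of R G b) '' B)) :
    a ∈ Subgroup.closure B := by
  have hspan := Submodule.span_mono (Set.image_mono (Subgroup.subset_closure (k := B))) ha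
  have h := coeffSumOn_mul_eq_zero_of_mem_span hspan 1
  by_contra haH
  rw [mul_one, map_sub, one_def, of_apply, coeffSumOn_single, coeffSumOn_single,
    Set.indicator_of_mem (Subgroup.one_mem _), Set.indicator_of_notMem haH] at h
  simp at h

end MonoidAlgebra

/-- If the right `ℤ[G]`-submodule of `ℤ[G]` generated by
`{1 - a : a ∈ A}` is finitely generated, then the subgroup generated by `A`
is finitely generated. -/
theorem stmt_1 {G : Type*} [Group G] (A : Set G)
    (h : (Submodule.span (MonoidAlgebra ℤ G)ᵐᵒᵖ
        ((fun a => (1 : MonoidAlgebra ℤ G) - MonoidAlgebra.of ℤ G a) '' A)).FG) :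
    (Subgroup.closure A).FG := by
  classical
  obtain ⟨s, hsA, hspan⟩ := (Submodule.fg_span_iff_fg_span_finset_subset _).1 h
  obtain ⟨A₀, hA₀A, rfl⟩ := Finset.subset_set_image_iff.1 hsA
  refine ⟨A₀, le_antisymm (Subgroup.closure_mono hA₀A) ((Subgroup.closure_le _).2 fun a ha => ?_)⟩
  apply MonoidAlgebra.mem_closure_of_one_sub_of_mem_span (R := ℤ)
  rw [← Finset.coe_image, ← hspan]
  exact Submodule.subset_span ⟨a, ha, rfl⟩
end

section
/- Let F be a non-abelian free group of finite rank and let K be a subgroup of F of infinite index. If K contains a nontrivial normal subgroup L of F, then K is not finitely generated. -/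
/-!
If `K = ⟨T⟩` with `T` finite, every prefix of the reduced word of an element of `K` has the form
`k * q` with `k ∈ K` and `q` a prefix of the word of a generator, so such prefixes meet only finitely
many right cosets of `K`. As `K` has infinite index there is a `g` such that no `g * a`, `a` a letter,
lies in one of these cosets. Conjugating a nontrivial `l ∈ L` by `g * a`, with `a` chosen so that no
cancellation occurs (possible because there are at least four letters), gives an element of
`L ≤ K` whose reduced word begins with that of `g * a`: a contradiction.
-/

open List

theorem List.prefix_or_exists_of_prefix_append {α : Type*} {A B p : List α}
    (h : p <+: A ++ B) : p <+: A ∨ ∃ r, r <+: B ∧ p = A ++ r := by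
  obtain ⟨t, ht⟩ := h
  rcases append_eq_append_iff.mp ht with ⟨a, hA, -⟩ | ⟨c, hp, hB⟩
  · exact .inl ⟨a, hA.symm⟩
  · exact .inr ⟨c, ⟨t, hB.symm⟩, hp⟩

theorem Subgroup.exists_ne_mul_of_infinite_quotient {G : Type*} [Group G] {K : Subgroup G}
    [Infinite (G ⧸ K)] {X : Set G} (hX : X.Finite) : ∃ g, ∀ k ∈ K, ∀ x ∈ X, g ≠ k * x := by
  obtain ⟨y, hy⟩ := (hX.image fun x => ((x⁻¹ : G) : G ⧸ K)).exists_notMem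
  obtain ⟨y, rfl⟩ := QuotientGroup.mk_surjective y
  refine ⟨y⁻¹, fun k hk x hx hyx => hy ⟨x, hx, QuotientGroup.eq.mpr ?_⟩⟩
  have hxy : x * y = k⁻¹ := by rw [← inv_inv y, hyx]; group
  simpa [hxy] using inv_mem hk

namespace FreeGroup

variable {α : Type*}

theorem Red.exists_prefix_mk_eq {w w' : List (α × Bool)} (h : Red w w') {p : List (α × Bool)}
    (hp : p <+: w') : ∃ q, q <+: w ∧ mk q = mk p := by
  induction h generalizing p with
  | refl => exact ⟨p, hp, rfl⟩
  | tail _ hstep ih =>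
    rcases hstep with @⟨L₁, L₂, x, b⟩
    rcases prefix_or_exists_of_prefix_append hp with hpL | ⟨r, hr, rfl⟩
    · exact ih (hpL.trans (prefix_append _ _))
    · obtain ⟨q, hq, he⟩ := ih (p := L₁ ++ (x, b) :: (x, !b) :: r) (by simpa using hr)
      exact ⟨q, hq, he.trans (Quot.sound Red.Step.not)⟩

theorem exists_letter_ne [Nontrivial α] (x y z : α × Bool) : ∃ a, a ≠ x ∧ a ≠ y ∧ a ≠ z := by
  classical
  obtain ⟨s, s', hs⟩ := exists_pair_ne α
  have hcard : ({x, y, z} : Finset (α × Bool)).card <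
      (({s, s'} : Finset α) ×ˢ (Finset.univ : Finset Bool)).card := by
    rw [Finset.card_product, Finset.card_pair hs, Finset.card_univ, Fintype.card_bool]
    exact Finset.card_le_three.trans_lt (by norm_num)
  obtain ⟨a, -, ha⟩ := Finset.exists_mem_notMem_of_card_lt_card hcard
  simp only [Finset.mem_insert, Finset.mem_singleton, not_or] at ha
  exact ⟨a, ha⟩

theorem snd_eq_of_ne_of_fst_eq {a b : α × Bool} (h : a ≠ (b.1, !b.2)) (h₁ : a.1 = b.1) :
    a.2 = b.2 := by
  obtain ⟨a₁, a₂⟩ := a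
  obtain ⟨b₁, b₂⟩ := b
  cases a₂ <;> cases b₂ <;> simp_all

variable [DecidableEq α]

theorem exists_prefix_eq_mul_of_mem_closure {T : Set (FreeGroup α)} {u : FreeGroup α}
    (hu : u ∈ Subgroup.closure T) {p : List (α × Bool)} (hp : p <+: u.toWord) :
    ∃ k ∈ Subgroup.closure T, ∃ t ∈ insert 1 T, ∃ q, q <+: t.toWord ∧ mk p = k * mk q := by
  induction hu using Subgroup.closure_induction generalizing p with
  | mem t ht => exact ⟨1, one_mem _, t, .inr ht, p, hp, (one_mul _).symm⟩
  | one =>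
    rw [toWord_one, prefix_nil] at hp
    exact ⟨1, one_mem _, 1, .inl rfl, [], prefix_rfl, by rw [hp, one_mul]⟩
  | mul u v hu hv ihu ihv =>
    rw [toWord_mul] at hp
    obtain ⟨r, hr, hrp⟩ := reduce.red.exists_prefix_mk_eq hp
    rw [← hrp]
    rcases prefix_or_exists_of_prefix_append hr with hru | ⟨r, hrv, rfl⟩
    · exact ihu hru
    · obtain ⟨k, hk, t, ht, q, hq, he⟩ := ihv hrv
      refine ⟨u * k, mul_mem hu hk, t, ht, q, hq, ?_⟩
      rw [← mul_mk, mk_toWord, he, mul_assoc]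
  | inv u hu ih =>
    rw [toWord_inv] at hp
    obtain ⟨r, hr⟩ := hp
    have hu' : invRev r ++ invRev p = u.toWord := by rw [← invRev_append, hr, invRev_invRev]
    obtain ⟨k, hk, t, ht, q, hq, he⟩ := ih ⟨invRev p, hu'⟩
    refine ⟨u⁻¹ * k, mul_mem (inv_mem hu) hk, t, ht, q, hq, ?_⟩
    rw [mul_assoc, ← he, ← mk_toWord (x := u), ← hu', ← mul_mk, ← inv_mk, ← inv_mk]
    group

theorem toWord_mul_mk_singleton {g : FreeGroup α} {a : α × Bool}
    (h : ∀ b ∈ g.toWord.getLast?, b.1 = a.1 → b.2 = a.2) :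
    (g * mk [a]).toWord = g.toWord ++ [a] := by
  have hmk : g * mk [a] = mk (g.toWord ++ [a]) := by rw [← mul_mk, mk_toWord]
  rw [hmk, toWord_mk, IsReduced.reduce_eq]
  exact isChain_append.mpr ⟨isReduced_toWord, IsReduced.singleton, by simpa using h⟩

theorem toWord_conj_of_isReduced {g c : FreeGroup α} (hc : c ≠ 1)
    (hleft : IsReduced (g.toWord ++ c.toWord)) (hright : IsReduced (c.toWord ++ g⁻¹.toWord)) :
    (g * c * g⁻¹).toWord = g.toWord ++ c.toWord ++ g⁻¹.toWord := by
  have hmk : g * c * g⁻¹ = mk (g.toWord ++ c.toWord ++ g⁻¹.toWord) := by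
    rw [← mul_mk, ← mul_mk, mk_toWord, mk_toWord, mk_toWord]
  rw [hmk, toWord_mk, IsReduced.reduce_eq (hleft.append_overlap hright ?_)]
  rwa [Ne, toWord_eq_nil_iff]

theorem exists_toWord_prefix_mem_of_normal [Nontrivial α] {L : Subgroup (FreeGroup α)}
    (hL : L.Normal) (hne : L ≠ ⊥) (g : FreeGroup α) :
    ∃ a : α × Bool, ∃ u ∈ L, (g * mk [a]).toWord <+: u.toWord := by
  obtain ⟨l, hlL, hl⟩ := L.bot_or_exists_ne_one.resolve_left hne
  have hW : l.toWord ≠ [] := by rwa [Ne, toWord_eq_nil_iff]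
  set first := l.toWord.head hW
  set last := l.toWord.getLast hW
  -- `a` cancels neither with the last letter of `g` (a dummy if `g = 1`) nor with the first
  -- or last letter of `l`.
  obtain ⟨a, hag, ha_first, ha_last⟩ := exists_letter_ne
    ((g.toWord.getLast?.getD first).1, !(g.toWord.getLast?.getD first).2)
    (first.1, !first.2) last
  have hga : (g * mk [a]).toWord = g.toWord ++ [a] := by
    refine toWord_mul_mk_singleton fun b hb hba => (snd_eq_of_ne_of_fst_eq ?_ hba.symm).symm
    rwa [Option.mem_def.mp hb] at hag
  refine ⟨a, _, hL.conj_mem l hlL (g * mk [a]), ?_⟩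
  rw [toWord_conj_of_isReduced hl, append_assoc]
  · exact prefix_append _ _
  · refine isChain_append.mpr ⟨isReduced_toWord, isReduced_toWord, fun b hb c hc => ?_⟩
    rw [hga, getLast?_concat, Option.mem_some_iff] at hb
    rw [head?_eq_some_head hW, Option.mem_some_iff] at hc
    subst hb hc
    exact snd_eq_of_ne_of_fst_eq ha_first
  · refine isChain_append.mpr ⟨isReduced_toWord, isReduced_toWord, fun b hb c hc => ?_⟩
    rw [getLast?_eq_some_getLast hW, Option.mem_some_iff] at hb
    rw [toWord_inv, hga, invRev_append] at hc
    simp only [invRev, map_cons, map_nil, reverse_cons, reverse_nil, nil_append, cons_append,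
      head?_cons, Option.mem_def, Option.some.injEq] at hc
    subst hb hc
    exact snd_eq_of_ne_of_fst_eq (by simpa using ha_last.symm)

end FreeGroup

/-- A subgroup of infinite index in a non-abelian free group of
finite rank which contains a nontrivial normal subgroup is not finitely generated. -/
theorem stmt_2 {S : Type*} [Finite S] (hS : 2 ≤ Nat.card S)
    (K L : Subgroup (FreeGroup S))
    (hinf : Infinite (FreeGroup S ⧸ K))
    (hLK : L ≤ K) (hL : L.Normal) (hne : L ≠ ⊥) :
    ¬ K.FG := by
  classical
  rintro ⟨T, rfl⟩
  have : Nontrivial S := Finite.one_lt_card_iff_nontrivial.mp hS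
  set P := ⋃ t ∈ insert 1 (T : Set (FreeGroup S)), {q | q <+: t.toWord}
  have hP : P.Finite := (T.finite_toSet.insert 1).biUnion fun t _ =>
    t.toWord.inits.finite_toSet.subset fun q hq => (mem_inits q _).mpr hq
  obtain ⟨g, hg⟩ := Subgroup.exists_ne_mul_of_infinite_quotient (K := .closure T)
    (hP.image2 (fun q a => FreeGroup.mk q * (FreeGroup.mk [a])⁻¹) Set.finite_univ)
  obtain ⟨a, u, huL, hpre⟩ := FreeGroup.exists_toWord_prefix_mem_of_normal hL hne g
  obtain ⟨k, hk, t, ht, q, hq, he⟩ := FreeGroup.exists_prefix_eq_mul_of_mem_closure (hLK huL) hpre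
  refine hg k hk _ ⟨q, Set.mem_biUnion ht hq, a, trivial, rfl⟩ ?_
  rw [FreeGroup.mk_toWord] at he
  rw [← mul_assoc, ← he, mul_inv_cancel_right]
end

section
/- Let G = F(a,b) be the free group on two generators, with N = [G,G] and H = ⟨a⟩. Then the subgroup HN of G is not finitely generated. -/
/-!
Map `F(a, b)` to the restricted wreath product `ℤ ≀ ℤ = ℤ^(ℤ) ⋊ ℤ` by sending `a` to the
indicator of `0` in the base and `b` to the generator of the top `ℤ`. Both `a` and all
commutators land in the base, hence so does `HN`. If `HN` were generated by finitely many
elements, their images, and therefore the whole image of `HN`, would be supported on one finite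
set `s ⊆ ℤ`. But `b^m a b^(-m) ∈ HN` maps to the indicator of `m`, for every `m ∈ ℤ`.
-/

open SemidirectProduct Multiplicative Finsupp

theorem Subgroup.FG.map {G G' : Type*} [Group G] [Group G'] {K : Subgroup G} (hK : K.FG)
    (f : G →* G') : (K.map f).FG := by
  classical
  obtain ⟨S, rfl⟩ := hK
  exact ⟨S.image f, by rw [Finset.coe_image, MonoidHom.map_closure]⟩

theorem conj_mem_sup_commutator {G : Type*} [Group G] {H : Subgroup G} {a : G} (ha : a ∈ H)
    (g : G) : g * a * g⁻¹ ∈ H ⊔ commutator G := by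
  have hcomm : g * a * g⁻¹ * a⁻¹ ∈ commutator G :=
    Subgroup.commutator_mem_commutator (Subgroup.mem_top g) (Subgroup.mem_top a)
  simpa using Subgroup.mul_mem _ (Subgroup.mem_sup_right hcomm) (Subgroup.mem_sup_left ha)

namespace RestrictedWreath

section Shift

variable {ι M : Type*} [AddCommGroup ι] [AddCommMonoid M]

noncomputable def shift : Multiplicative ι →* MulAut (Multiplicative (ι →₀ M)) where
  toFun z := AddEquiv.toMultiplicative (Finsupp.domCongr (Equiv.addRight z.toAdd))
  map_one' := by
    ext f i
    simp [Equiv.Perm.one_def]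
  map_mul' y z := by
    ext f i
    simp [Equiv.Perm.mul_def]
    congr 1
    abel

theorem shift_single (z i : ι) (m : M) :
    shift (ofAdd z) (ofAdd (single i m)) = ofAdd (single (i + z) m) := by
  simp [shift, equivMapDomain_single]

end Shift

section SupportedIn

variable {ι M Q : Type*} [AddCommGroup M] [Group Q]
  {ψ : Q →* MulAut (Multiplicative (ι →₀ M))}

variable (ψ) in
def supportedIn (s : Set ι) : Subgroup (Multiplicative (ι →₀ M) ⋊[ψ] Q) where
  carrier := {x | x.right = 1 ∧ ↑x.left.toAdd.support ⊆ s}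
  one_mem' := by simp
  mul_mem' := by
    classical
    rintro x y ⟨hx, hxs⟩ ⟨hy, hys⟩
    refine ⟨by simp [hx, hy], ?_⟩
    simp only [mul_left, hx, map_one, MulAut.one_apply, toAdd_mul]
    exact (Finset.coe_subset.mpr support_add).trans
      (Finset.coe_union (α := ι) _ _ ▸ Set.union_subset hxs hys)
  inv_mem' := by
    rintro x ⟨hx, hxs⟩
    simpa [hx] using hxs

theorem exists_le_supportedIn {K : Subgroup (Multiplicative (ι →₀ M) ⋊[ψ] Q)} (hK : K.FG)
    (hright : K ≤ rightHom.ker) : ∃ s : Finset ι, K ≤ supportedIn ψ s := by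
  classical
  obtain ⟨S, rfl⟩ := hK
  refine ⟨S.biUnion fun x ↦ x.left.toAdd.support, (Subgroup.closure_le _).mpr fun x hx ↦
    ⟨hright (Subgroup.subset_closure hx), ?_⟩⟩
  exact_mod_cast Finset.subset_biUnion_of_mem (fun x ↦ x.left.toAdd.support) hx

end SupportedIn

noncomputable def ofFreeGroup :
    FreeGroup Bool →* Multiplicative (ℤ →₀ ℤ) ⋊[shift] Multiplicative ℤ :=
  FreeGroup.lift fun x ↦ if x then inl (ofAdd (single 0 1)) else inr (ofAdd 1)

theorem ofFreeGroup_conj (m : ℤ) :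
    ofFreeGroup (FreeGroup.of false ^ m * FreeGroup.of true * (FreeGroup.of false ^ m)⁻¹) =
      inl (ofAdd (single m 1)) := by
  have ha : ofFreeGroup (FreeGroup.of true) = inl (ofAdd (single 0 1)) := by simp [ofFreeGroup]
  have hb : ofFreeGroup (FreeGroup.of false) = inr (ofAdd 1) := by simp [ofFreeGroup]
  have hpow : (ofAdd (1 : ℤ)) ^ m = ofAdd m := by simp [← ofAdd_zsmul]
  rw [map_mul, map_mul, map_inv, map_zpow, ha, hb, ← map_zpow, hpow, ← map_inv, ← inl_aut,
    shift_single, zero_add]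

theorem sup_commutator_le_ker :
    Subgroup.closure {FreeGroup.of true} ⊔ commutator (FreeGroup Bool) ≤
      (rightHom.comp ofFreeGroup).ker :=
  sup_le (by simp [ofFreeGroup]) (Abelianization.commutator_subset_ker _)

end RestrictedWreath

open RestrictedWreath in
/-- In `G = F(a,b)` with `N = [G,G]` and `H = ⟨a⟩`,
the subgroup `HN` is not finitely generated. -/
theorem stmt_6 :
    letI G := FreeGroup Bool
    letI a : G := FreeGroup.of true
    letI H : Subgroup G := Subgroup.closure {a}
    letI N : Subgroup G := commutator G
    ¬ (H ⊔ N).FG := by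
  intro hFG
  obtain ⟨s, hs⟩ := exists_le_supportedIn (hFG.map ofFreeGroup)
    (Subgroup.map_le_iff_le_comap.mpr sup_commutator_le_ker)
  obtain ⟨m, hm⟩ := Infinite.exists_notMem_finset s
  have hconj := hs (Subgroup.mem_map_of_mem ofFreeGroup
    (conj_mem_sup_commutator (Subgroup.mem_closure_singleton_self _) (FreeGroup.of false ^ m)))
  rw [ofFreeGroup_conj] at hconj
  exact hm (hconj.2 (by simp))
end

section
/- Let G = F(a,b) be the free group on two generators. The right ℤ[G]-submodule of ℤ[G] generated by the set X = { 1 − a } ∪ { 1 − w a^ε b^δ a^{−ε} b^{−δ} w^{−1} : w ∈ G, ε, δ ∈ {±1} } is not finitely generated as a right ℤ[G]-module. -/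
/-!
For a subgroup `H = ⟨T⟩` of a group `G`, the right ideal of `R[G]` spanned by the elements
`1 - t`, `t ∈ T`, contains `1 - g` exactly when `g ∈ H`: it lies in the kernel of the map of right
`R[G]`-modules `R[G] → R[G ⧸ H]`, `g ↦ g⁻¹ H`. So if the right ideal spanned by `1 - S` were
finitely generated, it would be spanned by `1 - T` for a finite `T ⊆ S`, and `⟨S⟩ = ⟨T⟩` would
be finitely generated. For the set `S` of the statement it is not: `a ↦ (0 1)`, `b ↦ (n ↦ n + 1)`
sends `⟨S⟩` into the permutations of `ℤ` moving finitely many points, so a finitely generated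
subgroup of it moves only finitely many integers in total, yet `⟨S⟩` contains every
`b^n a b^{-n}`, which moves `n`.
-/

open MonoidAlgebra MulAction Subgroup Submodule

namespace MonoidAlgebra

variable {R G α : Type*} [CommRing R] [Group G]

lemma mul_of_eq_mapDomain (x : R[G]) (g : G) :
    x * of R G g = mapDomainLinearMap R R (· * g) x := by
  induction x using induction_linear with
  | zero => simp
  | add x y hx hy => rw [add_mul, hx, hy, map_add]
  | single h r => simp [single_mul_single, mapDomainLinearMap_single]

def oneSubMemSubgroup (I : Submodule R[G]ᵐᵒᵖ R[G]) : Subgroup G where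
  carrier := {g | 1 - of R G g ∈ I}
  one_mem' := by simp [← one_def]
  mul_mem' {g h} hg hh := by
    have : 1 - of R G (g * h) = MulOpposite.op (of R G h) • (1 - of R G g) + (1 - of R G h) := by
      rw [op_smul_eq_mul, map_mul, sub_mul, one_mul]; abel
    simpa only [Set.mem_ofPred, this] using I.add_mem (I.smul_mem _ hg) hh
  inv_mem' {g} hg := by
    have : 1 - of R G g⁻¹ = -(MulOpposite.op (of R G g⁻¹) • (1 - of R G g)) := by
      rw [op_smul_eq_mul, sub_mul, one_mul, ← map_mul, mul_inv_cancel, map_one, neg_sub]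
    simpa only [Set.mem_ofPred, this] using I.neg_mem (I.smul_mem _ hg)

variable [MulAction G α]

variable (R) in
def orbitMapKer (p : α) : Submodule R[G]ᵐᵒᵖ R[G] where
  carrier := {x | mapDomainLinearMap R R (fun g : G => g⁻¹ • p) x = 0}
  zero_mem' := map_zero _
  add_mem' hx hy := by simp_all
  smul_mem' y x hx := by
    rw [Set.mem_ofPred, MulOpposite.smul_eq_mul_unop]
    induction y.unop using induction_on with
    | of g =>
      have hcomp : (fun h : G => h⁻¹ • p) ∘ (· * g) = (g⁻¹ • ·) ∘ fun h : G => h⁻¹ • p := by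
        ext h; simp [mul_smul]
      rw [mul_of_eq_mapDomain, ← LinearMap.comp_apply, ← mapDomainLinearMap_comp, hcomp,
        mapDomainLinearMap_comp, LinearMap.comp_apply, hx, map_zero]
    | add y z hy hz => rw [mul_add, map_add, hy, hz, add_zero]
    | smul r y hy => rw [mul_smul_comm, map_smul, hy, smul_zero]

lemma one_sub_mem_orbitMapKer_iff [Nontrivial R] {p : α} {g : G} :
    1 - of R G g ∈ orbitMapKer R p ↔ g ∈ stabilizer G p := by
  change mapDomainLinearMap R R _ (single 1 1 - single g 1) = 0 ↔ _
  rw [map_sub, mapDomainLinearMap_single, mapDomainLinearMap_single, sub_eq_zero,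
    single_left_inj one_ne_zero, inv_one, one_smul, eq_inv_smul_iff, mem_stabilizer_iff]

theorem mem_closure_iff_one_sub_mem_span [Nontrivial R] {T : Set G} {g : G} :
    g ∈ closure T ↔ 1 - of R G g ∈ span R[G]ᵐᵒᵖ ((fun t => 1 - of R G t) '' T) := by
  constructor
  · refine fun hg => (closure_le (oneSubMemSubgroup (span R[G]ᵐᵒᵖ _))).2 ?_ hg
    exact fun t ht => subset_span ⟨t, ht, rfl⟩
  · intro hg
    have hle : span R[G]ᵐᵒᵖ ((fun t => 1 - of R G t) '' T) ≤
        orbitMapKer R ((1 : G) : G ⧸ closure T) := by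
      rw [span_le]
      rintro _ ⟨t, ht, rfl⟩
      rw [SetLike.mem_coe, one_sub_mem_orbitMapKer_iff, stabilizer_quotient]
      exact subset_closure ht
    simpa using one_sub_mem_orbitMapKer_iff.1 (hle hg)

theorem fg_closure_of_fg_span_one_sub [Nontrivial R] {S : Set G}
    (h : (span R[G]ᵐᵒᵖ ((fun s => 1 - of R G s) '' S)).FG) : (closure S).FG := by
  classical
  obtain ⟨X, hXS, hspan⟩ := (fg_span_iff_fg_span_finset_subset _).1 h
  obtain ⟨T, hTS, rfl⟩ := Finset.subset_set_image_iff.1 hXS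
  refine ⟨T, le_antisymm (closure_mono hTS) (closure_le _ |>.2 fun s hs => ?_)⟩
  rw [SetLike.mem_coe, mem_closure_iff_one_sub_mem_span (R := R), ← Finset.coe_image, ← hspan]
  exact subset_span ⟨s, hs, rfl⟩

end MonoidAlgebra

section Finitary

variable (G α : Type*) [Group G] [MulAction G α]

def finitarySubgroup : Subgroup G where
  carrier := {g | (fixedBy α g)ᶜ.Finite}
  one_mem' := by simp
  mul_mem' {g h} hg hh := (hg.union hh).subset <| by
    rw [← Set.compl_inter, Set.compl_subset_compl]
    exact fixedBy_mul α g h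
  inv_mem' := by simp

variable {G α}

lemma mem_finitarySubgroup {g : G} : g ∈ finitarySubgroup G α ↔ (fixedBy α g)ᶜ.Finite := Iff.rfl

open scoped Pointwise in
instance : (finitarySubgroup G α).Normal where
  conj_mem n hn g := by
    rw [mem_finitarySubgroup, ← smul_fixedBy, ← Set.smul_set_compl]
    exact hn.smul_set

theorem not_fg_of_le_comap_finitarySubgroup {K : Type*} [Group K] (φ : K →* G) {H : Subgroup K}
    (hH : H ≤ (finitarySubgroup G α).comap φ) (hinf : (⋃ h ∈ H, (fixedBy α (φ h))ᶜ).Infinite) :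
    ¬ H.FG := by
  rintro ⟨T, rfl⟩
  set A := ⋃ t ∈ T, (fixedBy α (φ t))ᶜ
  have hA : A.Finite := T.finite_toSet.biUnion fun t ht => hH (subset_closure ht)
  have hfix : closure (T : Set K) ≤ (fixingSubgroup G Aᶜ).comap φ := by
    refine (closure_le _).2 fun t ht => (mem_fixingSubgroup_iff_subset_fixedBy G).2 ?_
    exact Set.compl_subset_comm.1 (Set.subset_biUnion_of_mem (u := fun t => (fixedBy α (φ t))ᶜ) ht)
  refine hinf (hA.subset (Set.iUnion₂_subset fun h hh => ?_))
  exact Set.compl_subset_comm.1 ((mem_fixingSubgroup_iff_subset_fixedBy G).1 (hfix hh))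

end Finitary

section FreeGroup

open FreeGroup Equiv

def swapShiftHom : FreeGroup Bool →* Perm ℤ :=
  FreeGroup.lift fun x => if x then swap 0 1 else Equiv.addRight 1

def aConjCommutators : Set (FreeGroup Bool) :=
  {of true} ∪ {g | ∃ w : FreeGroup Bool, ∃ ε δ : ℤ, (ε = 1 ∨ ε = -1) ∧ (δ = 1 ∨ δ = -1) ∧
    g = w * (of true ^ ε * of false ^ δ * of true ^ (-ε) * of false ^ (-δ)) * w⁻¹}

lemma swap_mem_finitarySubgroup : swap (0 : ℤ) 1 ∈ finitarySubgroup (Perm ℤ) ℤ := by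
  refine (Set.toFinite {0, 1}).subset fun x hx => ?_
  by_contra h
  simp only [Set.mem_insert_iff, Set.mem_singleton_iff, not_or] at h
  exact hx (swap_apply_of_ne_of_ne h.1 h.2)

lemma closure_aConjCommutators_le :
    closure aConjCommutators ≤ (finitarySubgroup (Perm ℤ) ℤ).comap swapShiftHom := by
  set N := (finitarySubgroup (Perm ℤ) ℤ).comap swapShiftHom
  have ha : of true ∈ N := by simpa [N, swapShiftHom] using swap_mem_finitarySubgroup
  rw [Subgroup.closure_le]
  rintro g (rfl | ⟨w, ε, δ, -, -, rfl⟩)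
  · exact ha
  · rw [show of true ^ ε * of false ^ δ * of true ^ (-ε) * of false ^ (-δ) =
        of true ^ ε * (of false ^ δ * (of true ^ ε)⁻¹ * (of false ^ δ)⁻¹) by group]
    exact (normal_comap _).conj_mem _
      (mul_mem (zpow_mem ha ε) ((normal_comap _).conj_mem _ (inv_mem (zpow_mem ha ε)) _)) w

lemma conj_pow_mem_closure_aConjCommutators (n : ℕ) :
    of false ^ n * of true * (of false ^ n)⁻¹ ∈ closure aConjCommutators := by
  induction n with
  | zero => simpa using Subgroup.subset_closure (show of true ∈ aConjCommutators from Or.inl rfl)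
  | succ n ih =>
    have hc : _ ∈ aConjCommutators :=
      Or.inr ⟨of false ^ (n + 1), 1, -1, Or.inl rfl, Or.inr rfl, rfl⟩
    convert mul_mem (Subgroup.subset_closure hc) ih using 1
    group

lemma swapShiftHom_conj_pow_apply_ne (n : ℕ) :
    swapShiftHom (of false ^ n * of true * (of false ^ n)⁻¹) n ≠ n := by
  simp [swapShiftHom, Perm.inv_def]

theorem not_fg_closure_aConjCommutators : ¬ (closure aConjCommutators).FG := by
  refine not_fg_of_le_comap_finitarySubgroup swapShiftHom closure_aConjCommutators_le ?_
  refine Set.infinite_of_injective_forall_mem (f := fun n : ℕ => (n : ℤ)) Nat.cast_injective ?_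
  exact fun n => Set.mem_iUnion₂.2
    ⟨_, conj_pow_mem_closure_aConjCommutators n, swapShiftHom_conj_pow_apply_ne n⟩

end FreeGroup

/-- In `ℤ[G]` for `G = F(a,b)`, the right `ℤ[G]`-submodule
generated by `{1 - a} ∪ {1 - w a^ε b^δ a^{-ε} b^{-δ} w⁻¹ : w ∈ G, ε,δ ∈ {±1}}`
is not finitely generated. -/
theorem stmt_8 :
    letI G := FreeGroup Bool
    letI a : G := FreeGroup.of true
    letI b : G := FreeGroup.of false
    ¬ (Submodule.span (MonoidAlgebra ℤ G)ᵐᵒᵖ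
        ({(1 : MonoidAlgebra ℤ G) - MonoidAlgebra.of ℤ G a} ∪
         {ξ : MonoidAlgebra ℤ G | ∃ w : G, ∃ ε δ : ℤ,
            (ε = 1 ∨ ε = -1) ∧ (δ = 1 ∨ δ = -1) ∧
            ξ = 1 - MonoidAlgebra.of ℤ G
              (w * (a ^ ε * b ^ δ * a ^ (-ε) * b ^ (-δ)) * w⁻¹)})).FG := by
  intro h
  refine not_fg_closure_aConjCommutators (MonoidAlgebra.fg_closure_of_fg_span_one_sub (R := ℤ) ?_)
  convert h using 2
  rw [aConjCommutators, Set.image_union, Set.image_singleton]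
  congr 1
  ext ξ
  constructor
  · rintro ⟨_, ⟨w, ε, δ, hε, hδ, rfl⟩, rfl⟩
    exact ⟨w, ε, δ, hε, hδ, rfl⟩
  · rintro ⟨w, ε, δ, hε, hδ, rfl⟩
    exact ⟨_, ⟨w, ε, δ, hε, hδ, rfl⟩, rfl⟩
end

section
/- Let S be a monoid and H an ℋ-class of S containing an idempotent e. Then H is a subgroup of S with identity e, and H is a maximal subgroup of S (every subgroup of S containing e is contained in H). -/
/-- Green's relation `ℛ`: `a ℛ b` iff `aS = bS`. -/
def greenR {S : Type*} [Monoid S] (x y : S) : Prop :=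
  Set.range (fun s => x * s) = Set.range (fun s => y * s)

/-- Green's relation `ℒ`: `a ℒ b` iff `Sa = Sb`. -/
def greenL {S : Type*} [Monoid S] (x y : S) : Prop :=
  Set.range (fun s => s * x) = Set.range (fun s => s * y)

/-- Green's relation `ℋ = ℛ ∩ ℒ`. -/
def greenH {S : Type*} [Monoid S] (x y : S) : Prop :=
  greenR x y ∧ greenL x y

/-- A subset `K` of a monoid `S` is a subgroup of `S` if it is closed under
multiplication and forms a group under the induced operation. -/
def IsSubgroupOf {S : Type*} [Monoid S] (K : Set S) : Prop :=
  (∀ x ∈ K, ∀ y ∈ K, x * y ∈ K) ∧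
  ∃ f ∈ K, (∀ x ∈ K, f * x = x ∧ x * f = x) ∧
    (∀ x ∈ K, ∃ y ∈ K, x * y = f ∧ y * x = f)

lemma greenR_of_ex {S : Type*} [Monoid S] {x e : S}
    (h1 : ∃ s, e * s = x) (h2 : ∃ t, x * t = e) : greenR x e := by
  obtain ⟨s0, hs⟩ := h1
  obtain ⟨t0, ht⟩ := h2
  ext a
  constructor
  · rintro ⟨u, rfl⟩
    exact ⟨s0 * u, by simp only [← hs, mul_assoc]⟩
  · rintro ⟨u, rfl⟩
    exact ⟨t0 * u, by simp only [← ht, mul_assoc]⟩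

lemma greenL_of_ex {S : Type*} [Monoid S] {x e : S}
    (h1 : ∃ s, s * e = x) (h2 : ∃ t, t * x = e) : greenL x e := by
  obtain ⟨s0, hs⟩ := h1
  obtain ⟨t0, ht⟩ := h2
  ext a
  constructor
  · rintro ⟨u, rfl⟩
    exact ⟨u * s0, by simp only [← hs, mul_assoc]⟩
  · rintro ⟨u, rfl⟩
    exact ⟨u * t0, by simp only [← ht, mul_assoc]⟩

lemma greenR_ex {S : Type*} [Monoid S] {x e : S} (h : greenR x e) :
    (∃ s, e * s = x) ∧ (∃ t, x * t = e) := by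
  constructor
  · have : x ∈ Set.range (fun s => e * s) := h ▸ ⟨1, mul_one x⟩
    exact this
  · have : e ∈ Set.range (fun s => x * s) := by rw [h]; exact ⟨1, mul_one e⟩
    exact this

lemma greenL_ex {S : Type*} [Monoid S] {x e : S} (h : greenL x e) :
    (∃ s, s * e = x) ∧ (∃ t, t * x = e) := by
  constructor
  · have : x ∈ Set.range (fun s => s * e) := h ▸ ⟨1, one_mul x⟩
    exact this
  · have : e ∈ Set.range (fun s => s * x) := by rw [h]; exact ⟨1, one_mul e⟩
    exact this

/-- If the `ℋ`-class `H` of an idempotent `e` in a monoid `S`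
contains that idempotent, then `H` is a subgroup of `S` with identity `e`, and
`H` is a maximal subgroup: every subgroup of `S` containing `e` is contained in `H`. -/
theorem stmt_12 {S : Type*} [Monoid S] (e : S) (he : e * e = e) :
    letI H : Set S := {x | greenH x e}
    ((∀ x ∈ H, ∀ y ∈ H, x * y ∈ H) ∧
     (∀ x ∈ H, e * x = x ∧ x * e = x) ∧
     (∀ x ∈ H, ∃ y ∈ H, x * y = e ∧ y * x = e)) ∧
    (∀ K : Set S, IsSubgroupOf K → e ∈ K → K ⊆ H) := by
  set H : Set S := {x | greenH x e} with hH
  -- identity facts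
  have hid : ∀ x ∈ H, e * x = x ∧ x * e = x := by
    intro x hx
    obtain ⟨⟨s, hs⟩, _⟩ := greenR_ex hx.1
    obtain ⟨⟨s', hs'⟩, _⟩ := greenL_ex hx.2
    constructor
    · rw [← hs, ← mul_assoc, he]
    · rw [← hs', mul_assoc, he]
  have hclosed : ∀ x ∈ H, ∀ y ∈ H, x * y ∈ H := by
    intro x hx y hy
    obtain ⟨⟨sx, hsx⟩, ⟨tx, htx⟩⟩ := greenR_ex hx.1
    obtain ⟨⟨sy, hsy⟩, ⟨ty, hty⟩⟩ := greenR_ex hy.1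
    obtain ⟨⟨sx', hsx'⟩, ⟨tx', htx'⟩⟩ := greenL_ex hx.2
    obtain ⟨⟨sy', hsy'⟩, ⟨ty', hty'⟩⟩ := greenL_ex hy.2
    refine ⟨greenR_of_ex ⟨sx * y, ?_⟩ ⟨ty * tx, ?_⟩, greenL_of_ex ⟨x * sy', ?_⟩ ⟨ty' * tx', ?_⟩⟩
    · rw [← mul_assoc, hsx]
    · rw [mul_assoc, ← mul_assoc y, hty, ← mul_assoc, (hid x hx).2, htx]
    · rw [mul_assoc, hsy']
    · rw [← mul_assoc, mul_assoc ty', htx', mul_assoc, (hid y hy).1, hty']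
  have hinv : ∀ x ∈ H, ∃ y ∈ H, x * y = e ∧ y * x = e := by
    intro x hx
    obtain ⟨_, ⟨t, ht⟩⟩ := greenR_ex hx.1
    obtain ⟨_, ⟨s, hs⟩⟩ := greenL_ex hx.2
    have hxe := (hid x hx).2
    have hex := (hid x hx).1
    -- a = e*t*e, b = e*s*e... use a := e * t * e and b := e * s * e, show a = b
    set a := e * t * e with ha
    set b := e * s * e with hb
    have hxa : x * a = e := by
      rw [ha, ← mul_assoc, ← mul_assoc, hxe, ht, he]
    have hbx : b * x = e := by
      rw [hb, mul_assoc, mul_assoc, hex, hs, he]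
    have hab : a = b := by
      have hbe : b * e = b := by rw [hb, mul_assoc, he]
      have hea : e * a = a := by rw [ha, ← mul_assoc, ← mul_assoc, he]
      calc a = e * a := hea.symm
        _ = (b * x) * a := by rw [hbx]
        _ = b * (x * a) := mul_assoc b x a
        _ = b * e := by rw [hxa]
        _ = b := hbe
    have hax : a * x = e := hab ▸ hbx
    refine ⟨a, ⟨greenR_of_ex ⟨t * e, by rw [ha, mul_assoc]⟩ ⟨x, hax⟩,
      greenL_of_ex ⟨e * t, by rw [ha, mul_assoc]⟩ ⟨x, hxa⟩⟩, hxa, hax⟩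
  refine ⟨⟨hclosed, hid, hinv⟩, ?_⟩
  rintro K ⟨hKclosed, f, hfK, hfid, hKinv⟩ heK x hxK
  -- first: f = e
  obtain ⟨y, hyK, hey, hye⟩ := hKinv e heK
  have hfe : f = e := by
    have h1 : f * e = e := ((hfid e heK).1)
    have : f * e = f := by rw [← hye, mul_assoc, he]
    rw [← h1, this]
  subst hfe
  obtain ⟨z, hzK, hxz, hzx⟩ := hKinv x hxK
  exact ⟨greenR_of_ex ⟨x, (hfid x hxK).1⟩ ⟨z, hxz⟩,
    greenL_of_ex ⟨x, (hfid x hxK).2⟩ ⟨z, hzx⟩⟩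
end
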